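/- arXiv:2111.03469 — 2 statements merged into one kernel-verified Lean document; each statement's English description precedes it below -/
import Mathlib

section
/- Let (Λⱼ)_{j≥1} be a nonincreasing sequence of positive reals and (cⱼ)_{j≥1} nonnegative reals with cⱼ ≤ Λⱼ for all j and ∑ⱼ cⱼ/Λⱼ ≤ m for a positive integer m. Then ∑ⱼ cⱼ ≤ ∑_{j=1}^{m} Λⱼ. -/
/-!
Let `L` be the `m`-th term of `Λ` (index `m - 1` here). Each `c j` is at most
`L * (c j / Λ j) + (Λ j - L)⁺`. Summing, the terms `L * (c j / Λ j)` contribute at most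
`L * m`, and by monotonicity the positive parts live on the first `m` indices, where they
add up to `∑_{j<m} Λ j - L * m`.
-/

open Finset

theorem le_mul_div_add_max_sub {c Λ : ℝ} (L : ℝ) (hΛ : 0 < Λ) (hc : 0 ≤ c) (hcΛ : c ≤ Λ) :
    c ≤ L * (c / Λ) + max (Λ - L) 0 := by
  have hratio_nonneg : 0 ≤ c / Λ := div_nonneg hc hΛ.le
  have hratio_le_one : c / Λ ≤ 1 := (div_le_one hΛ).2 hcΛ
  have hc_eq : c = c / Λ * Λ := (div_mul_cancel₀ c hΛ.ne').symm
  rcases le_total L Λ with hLΛ | hΛL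
  · rw [max_eq_left (sub_nonneg.2 hLΛ)]
    nlinarith
  · rw [max_eq_right (sub_nonpos.2 hΛL)]
    nlinarith

theorem hasSum_max_sub_of_le_of_ge {Λ : ℕ → ℝ} {L : ℝ} {m : ℕ}
    (h_lt : ∀ j < m, L ≤ Λ j) (h_ge : ∀ j, m ≤ j → Λ j ≤ L) :
    HasSum (fun j => max (Λ j - L) 0) (∑ j ∈ range m, (Λ j - L)) := by
  convert hasSum_sum_of_ne_finset_zero (L := SummationFilter.unconditional ℕ)
    (f := fun j => max (Λ j - L) 0) (s := range m) fun j hj => max_eq_right (sub_nonpos.2 (h_ge j (by simpa using hj))) using 1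
  exact sum_congr rfl fun j hj => (max_eq_left (sub_nonneg.2 (h_lt j (mem_range.1 hj)))).symm

theorem stmt_10_general (Λ c : ℕ → ℝ) (hanti : Antitone Λ) (hpos : ∀ j, 0 < Λ j)
    (hc : ∀ j, 0 ≤ c j ∧ c j ≤ Λ j)
    (hsumc : Summable c) (hsumratio : Summable fun j => c j / Λ j)
    (m : ℕ) (hratio : ∑' j, c j / Λ j ≤ (m : ℝ)) :
    ∑' j, c j ≤ ∑ j ∈ Finset.range m, Λ j := by
  set L := Λ (m - 1)
  have hposPart : HasSum (fun j => max (Λ j - L) 0) (∑ j ∈ range m, (Λ j - L)) :=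
    hasSum_max_sub_of_le_of_ge (fun j hj => hanti (by omega)) (fun j hj => hanti (by omega))
  calc ∑' j, c j ≤ ∑' j, (L * (c j / Λ j) + max (Λ j - L) 0) :=
        hsumc.tsum_le_tsum (fun j => le_mul_div_add_max_sub L (hpos j) (hc j).1 (hc j).2)
          ((hsumratio.mul_left L).add hposPart.summable)
    _ = L * ∑' j, c j / Λ j + ∑ j ∈ range m, (Λ j - L) := by
        rw [(hsumratio.mul_left L).tsum_add hposPart.summable, tsum_mul_left, hposPart.tsum_eq]
    _ ≤ L * m + ∑ j ∈ range m, (Λ j - L) := by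
        gcongr
        exact (hpos _).le
    _ = ∑ j ∈ Finset.range m, Λ j := by
        rw [sum_sub_distrib, sum_const, card_range, nsmul_eq_mul]
        ring

/-- Water-filling lemma: if `Λ` is a nonincreasing sequence of positive reals,
`0 ≤ cⱼ ≤ Λⱼ` for all `j`, and `∑ⱼ cⱼ/Λⱼ ≤ m`, then `∑ⱼ cⱼ ≤ ∑_{j=1}^m Λⱼ`. -/
theorem stmt_10 (Λ c : ℕ → ℝ) (hanti : Antitone Λ) (hpos : ∀ j, 0 < Λ j)
    (hc : ∀ j, 0 ≤ c j ∧ c j ≤ Λ j)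
    (hsumc : Summable c) (hsumratio : Summable fun j => c j / Λ j)
    (m : ℕ) (hm : 1 ≤ m) (hratio : ∑' j, c j / Λ j ≤ (m : ℝ)) :
    ∑' j, c j ≤ ∑ j ∈ Finset.range m, Λ j :=
  stmt_10_general Λ c hanti hpos hc hsumc hsumratio m hratio
end

section
/- Convex duality for constrained linear maximization in a Hilbert space: let H be a real Hilbert space, x ∈ H, ε > 0, and V ⊆ H a closed subspace with projection P. Then sup{ ⟨x, g⟩ : g ∈ H, ‖g‖ ≤ 1, ‖P g‖ ≤ ε } = inf{ ‖x − v‖ + ε ‖v‖ : v ∈ V }. -/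
open scoped RealInnerProductSpace

set_option maxHeartbeats 1600000 in
/-- Convex duality in a Hilbert space: for `x ∈ H`, `ε > 0`, and a closed subspace `V` with
orthogonal projection `P`,
`sup { ⟨x, g⟩ : ‖g‖ ≤ 1, ‖P g‖ ≤ ε } = inf_{v ∈ V} ( ‖x - v‖ + ε ‖v‖ )`. -/
theorem stmt_17 {H : Type*} [NormedAddCommGroup H] [InnerProductSpace ℝ H]
    [CompleteSpace H] (V : Submodule ℝ H) (hV : IsClosed (V : Set H))
    (P : H → H) (hPmem : ∀ g, P g ∈ V)
    (hPortho : ∀ g, ∀ v ∈ V, ⟪g - P g, v⟫ = 0)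
    (x : H) (ε : ℝ) (hε : 0 < ε) :
    sSup {y : ℝ | ∃ g : H, ‖g‖ ≤ 1 ∧ ‖P g‖ ≤ ε ∧ y = ⟪x, g⟫}
      = ⨅ v : V, (‖x - (v : H)‖ + ε * ‖(v : H)‖) := by
  classical
  -- uniqueness of the orthogonal projection
  have Puniq : ∀ g u, u ∈ V → (∀ w ∈ V, ⟪g - u, w⟫ = 0) → P g = u := by
    intro g u hu h
    have hm : P g - u ∈ V := V.sub_mem (hPmem g) hu
    have h1 : ⟪g - u, P g - u⟫ = 0 := h _ hm
    have h2 : ⟪g - P g, P g - u⟫ = 0 := hPortho g _ hm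
    have h3 : ⟪P g - u, P g - u⟫ = 0 := by
      have e : ⟪P g - u, P g - u⟫ = ⟪g - u, P g - u⟫ - ⟪g - P g, P g - u⟫ := by
        rw [← inner_sub_left]
        congr 1
        abel
      rw [e, h1, h2]; ring
    exact sub_eq_zero.mp (inner_self_eq_zero.mp h3)
  set xV := P x with hxVdef
  set xT := x - P x with hxTdef
  have hxsum : x = xT + xV := by rw [hxTdef]; abel
  have hxVmem : xV ∈ V := hPmem x
  have horthoV : ∀ w ∈ V, ⟪xT, w⟫ = 0 := fun w hw => hPortho x w hw
  have hortho : ⟪xT, xV⟫ = 0 := horthoV xV hxVmem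
  set a := ‖xT‖ with hadef
  set b := ‖xV‖ with hbdef
  have ha0 : 0 ≤ a := norm_nonneg _
  have hb0 : 0 ≤ b := norm_nonneg _
  clear_value a b xT xV
  -- norm of combinations
  have hns : ∀ r t : ℝ, ‖r • xT + t • xV‖ ^ 2 = r ^ 2 * a ^ 2 + t ^ 2 * b ^ 2 := by
    intro r t
    have h := norm_add_sq_real (r • xT) (t • xV)
    rw [real_inner_smul_left, real_inner_smul_right, hortho] at h
    rw [h, norm_smul, norm_smul]
    simp only [Real.norm_eq_abs, mul_pow, sq_abs]
    rw [hadef, hbdef]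
    ring
  have pyth : ‖x‖ ^ 2 = a ^ 2 + b ^ 2 := by
    have h := hns 1 1
    rw [one_smul, one_smul, ← hxsum] at h
    simpa using h
  have hP0 : P 0 = 0 := Puniq 0 0 V.zero_mem (by intro w hw; simp)
  have h0S : (0 : ℝ) ∈ {y : ℝ | ∃ g : H, ‖g‖ ≤ 1 ∧ ‖P g‖ ≤ ε ∧ y = ⟪x, g⟫} :=
    ⟨0, by simp [hP0, hε.le]⟩
  have hSne : {y : ℝ | ∃ g : H, ‖g‖ ≤ 1 ∧ ‖P g‖ ≤ ε ∧ y = ⟪x, g⟫}.Nonempty := ⟨0, h0S⟩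
  have hSbdd : BddAbove {y : ℝ | ∃ g : H, ‖g‖ ≤ 1 ∧ ‖P g‖ ≤ ε ∧ y = ⟪x, g⟫} := by
    refine ⟨‖x‖, ?_⟩
    rintro y ⟨g, hg1, hg2, rfl⟩
    calc ⟪x, g⟫ ≤ ‖x‖ * ‖g‖ := real_inner_le_norm x g
      _ ≤ ‖x‖ * 1 := by nlinarith [norm_nonneg x]
      _ = ‖x‖ := mul_one _
  have hIbdd : BddBelow (Set.range fun v : V => ‖x - (v : H)‖ + ε * ‖(v : H)‖) := by
    refine ⟨0, ?_⟩
    rintro y ⟨v, rfl⟩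
    positivity
  refine le_antisymm ?_ ?_
  · -- weak duality
    refine csSup_le hSne ?_
    rintro y ⟨g, hg1, hg2, rfl⟩
    refine le_ciInf fun v => ?_
    have h0 : ⟪(v : H), g - P g⟫ = 0 := by
      rw [real_inner_comm]; exact hPortho g v v.2
    have key : ⟪x, g⟫ = ⟪x - (v : H), g⟫ + ⟪(v : H), P g⟫ := by
      have h0' : ⟪(v : H), g⟫ - ⟪(v : H), P g⟫ = 0 := by
        rw [← inner_sub_right]; exact h0
      rw [inner_sub_left]; linarith
    have b1 : ⟪x - (v : H), g⟫ ≤ ‖x - (v : H)‖ := by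
      calc ⟪x - (v : H), g⟫ ≤ ‖x - (v : H)‖ * ‖g‖ := real_inner_le_norm _ _
        _ ≤ ‖x - (v : H)‖ * 1 := by nlinarith [norm_nonneg (x - (v : H))]
        _ = _ := mul_one _
    have b2 : ⟪(v : H), P g⟫ ≤ ε * ‖(v : H)‖ := by
      calc ⟪(v : H), P g⟫ ≤ ‖(v : H)‖ * ‖P g‖ := real_inner_le_norm _ _
        _ ≤ ‖(v : H)‖ * ε := by nlinarith [norm_nonneg ((v : H))]
        _ = ε * ‖(v : H)‖ := mul_comm _ _
    linarith
  · -- strong duality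
    by_cases hcase : b ≤ ε * ‖x‖
    · -- inactive constraint : g* = ‖x‖⁻¹ • x, v* = 0
      have hval : ⟪x, (‖x‖⁻¹ : ℝ) • x⟫ = ‖x‖ := by
        rw [real_inner_smul_right, real_inner_self_eq_norm_sq]
        rcases eq_or_ne ‖x‖ 0 with h | h
        · simp [h]
        · field_simp
      have hg1 : ‖(‖x‖⁻¹ : ℝ) • x‖ ≤ 1 := by
        rw [norm_smul, Real.norm_eq_abs, abs_inv, abs_norm]
        rcases eq_or_ne ‖x‖ 0 with h | h
        · simp [h]
        · rw [inv_mul_cancel₀ h]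
      have hPg : P ((‖x‖⁻¹ : ℝ) • x) = (‖x‖⁻¹ : ℝ) • xV := by
        refine Puniq _ _ (V.smul_mem _ hxVmem) fun w hw => ?_
        have e : (‖x‖⁻¹ : ℝ) • x - (‖x‖⁻¹ : ℝ) • xV = (‖x‖⁻¹ : ℝ) • xT := by
          rw [← smul_sub, hxTdef, hxVdef]
        rw [e, real_inner_smul_left, horthoV w hw, mul_zero]
      have hg2 : ‖P ((‖x‖⁻¹ : ℝ) • x)‖ ≤ ε := by
        rw [hPg, norm_smul, Real.norm_eq_abs, abs_inv, abs_norm, ← hbdef]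
        rcases eq_or_ne ‖x‖ 0 with h | h
        · simp [h, hε.le]
        · have hx0 : 0 < ‖x‖ := lt_of_le_of_ne (norm_nonneg x) (Ne.symm h)
          rw [inv_mul_le_iff₀ hx0]
          exact hcase.trans (le_of_eq (mul_comm _ _))
      have hmemS : ‖x‖ ∈ {y : ℝ | ∃ g : H, ‖g‖ ≤ 1 ∧ ‖P g‖ ≤ ε ∧ y = ⟪x, g⟫} :=
        ⟨(‖x‖⁻¹ : ℝ) • x, hg1, hg2, hval.symm⟩
      calc (⨅ v : V, (‖x - (v : H)‖ + ε * ‖(v : H)‖))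
          ≤ ‖x - ((0 : V) : H)‖ + ε * ‖((0 : V) : H)‖ := ciInf_le hIbdd 0
        _ = ‖x‖ := by simp
        _ ≤ sSup {y : ℝ | ∃ g : H, ‖g‖ ≤ 1 ∧ ‖P g‖ ≤ ε ∧ y = ⟪x, g⟫} := le_csSup hSbdd hmemS
    · -- active constraint
      push_neg at hcase
      have hbpos : 0 < b := lt_of_le_of_lt (by positivity) hcase
      have hxpos : 0 < ‖x‖ := by nlinarith [norm_nonneg x, sq_nonneg a, pyth, hbpos]
      have hblex : b ≤ ‖x‖ := by nlinarith [norm_nonneg x, sq_nonneg a, pyth, hb0]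
      have hεlt1 : ε < 1 := by nlinarith [hcase, hblex, hxpos]
      obtain ⟨c, hcdef⟩ : ∃ c : ℝ, c = Real.sqrt (1 - ε ^ 2) := ⟨_, rfl⟩
      have hc2 : c ^ 2 = 1 - ε ^ 2 := by rw [hcdef]; exact Real.sq_sqrt (by nlinarith)
      have hcpos : 0 < c := by rw [hcdef]; exact Real.sqrt_pos.mpr (by nlinarith)
      obtain ⟨s, hsdef⟩ : ∃ s : ℝ, s = b - ε * a / c := ⟨_, rfl⟩
      have hsq : ε ^ 2 * a ^ 2 ≤ b ^ 2 * c ^ 2 := by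
        have h1 : ε * ‖x‖ * (ε * ‖x‖) < b * b :=
          mul_self_lt_mul_self (mul_nonneg hε.le (norm_nonneg x)) hcase
        have h2 : ε ^ 2 * (a ^ 2 + b ^ 2) < b ^ 2 := by
          rw [← pyth]
          calc ε ^ 2 * ‖x‖ ^ 2 = ε * ‖x‖ * (ε * ‖x‖) := by ring
            _ < b * b := h1
            _ = b ^ 2 := by ring
        have h3 : b ^ 2 * c ^ 2 = b ^ 2 - ε ^ 2 * b ^ 2 := by rw [hc2]; ring
        linarith [h2, h3]
      have hεa : ε * a ≤ b * c := by
        rw [← Real.sqrt_sq (mul_nonneg hε.le ha0), ← Real.sqrt_sq (mul_nonneg hb0 hcpos.le)]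
        apply Real.sqrt_le_sqrt
        linarith [hsq]
      have hs0 : 0 ≤ s := by
        rw [hsdef, sub_nonneg, div_le_iff₀ hcpos]
        linarith [hεa]
      -- primal optimizer
      obtain ⟨g₀, hg₀def⟩ : ∃ g₀ : H, g₀ = (c / a) • xT + (ε / b) • xV := ⟨_, rfl⟩
      have hinxV : ⟪x, xV⟫ = b ^ 2 := by
        rw [hxsum, inner_add_left, hortho, real_inner_self_eq_norm_sq, ← hbdef]; ring
      have hinxT : ⟪x, xT⟫ = a ^ 2 := by
        rw [hxsum, inner_add_left, real_inner_self_eq_norm_sq, real_inner_comm, hortho, ← hadef]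
        ring
      have hval : ⟪x, g₀⟫ = ε * b + c * a := by
        rw [hg₀def, inner_add_right, real_inner_smul_right, real_inner_smul_right, hinxV, hinxT]
        rcases eq_or_ne a 0 with h | h
        · rw [h]; field_simp; ring
        · field_simp; ring
      have hg₀norm : ‖g₀‖ ≤ 1 := by
        have h := hns (c / a) (ε / b)
        rw [← hg₀def] at h
        have h2 : (ε / b) ^ 2 * b ^ 2 = ε ^ 2 := by field_simp
        have h3 : (c / a) ^ 2 * a ^ 2 ≤ c ^ 2 := by
          rcases eq_or_ne a 0 with h' | h'
          · rw [h']; simp; positivity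
          · rw [div_pow, div_mul_cancel₀ _ (by positivity)]
        have h4 : ‖g₀‖ ^ 2 ≤ 1 := by rw [h, h2]; linarith [h3, hc2]
        nlinarith [h4, norm_nonneg g₀, sq_nonneg (‖g₀‖ - 1), sq_nonneg (‖g₀‖ + 1)]
      have hPg₀ : P g₀ = (ε / b) • xV := by
        refine Puniq _ _ (V.smul_mem _ hxVmem) fun w hw => ?_
        have e : g₀ - (ε / b) • xV = (c / a) • xT := by rw [hg₀def]; abel
        rw [e, real_inner_smul_left, horthoV w hw, mul_zero]
      have hg₀P : ‖P g₀‖ ≤ ε := by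
        rw [hPg₀, norm_smul, Real.norm_eq_abs, abs_of_nonneg (div_nonneg hε.le hb0), ← hbdef]
        rw [div_mul_cancel₀ _ (ne_of_gt hbpos)]
      have hmemS : ε * b + c * a ∈ {y : ℝ | ∃ g : H, ‖g‖ ≤ 1 ∧ ‖P g‖ ≤ ε ∧ y = ⟪x, g⟫} :=
        ⟨g₀, hg₀norm, hg₀P, hval.symm⟩
      -- dual optimizer
      obtain ⟨v₀, hv₀def⟩ : ∃ v₀ : V, (v₀ : H) = (s / b) • xV :=
        ⟨⟨_, V.smul_mem _ hxVmem⟩, rfl⟩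
      have hxv : x - (v₀ : H) = (1 : ℝ) • xT + (ε * a / (c * b)) • xV := by
        have e1 : (1 : ℝ) - s / b = ε * a / (c * b) := by
          rw [hsdef]; field_simp; ring
        have : x - (v₀ : H) = (1 : ℝ) • xT + ((1 : ℝ) - s / b) • xV := by
          rw [hv₀def, one_smul, sub_smul, one_smul]
          nth_rewrite 1 [hxsum]
          abel
        rw [this, e1]
      have hnxv : ‖x - (v₀ : H)‖ = a / c := by
        have h := hns 1 (ε * a / (c * b))
        rw [← hxv] at h
        have h2 : ‖x - (v₀ : H)‖ ^ 2 = (a / c) ^ 2 := by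
          rw [h]
          field_simp
          linear_combination a ^ 2 * hc2
        rw [← Real.sqrt_sq (norm_nonneg _), h2, Real.sqrt_sq (div_nonneg ha0 hcpos.le)]
      have hnv₀ : ‖(v₀ : H)‖ = s := by
        rw [hv₀def, norm_smul, Real.norm_eq_abs, abs_of_nonneg (div_nonneg hs0 hb0), ← hbdef]
        rw [div_mul_cancel₀ _ (ne_of_gt hbpos)]
      have hdual : ‖x - (v₀ : H)‖ + ε * ‖(v₀ : H)‖ = ε * b + c * a := by
        rw [hnxv, hnv₀, hsdef]
        have : a / c + ε * (b - ε * a / c) = ε * b + a * (1 - ε ^ 2) / c := by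
          field_simp; ring
        rw [this, ← hc2]
        field_simp
      calc (⨅ v : V, (‖x - (v : H)‖ + ε * ‖(v : H)‖))
          ≤ ‖x - (v₀ : H)‖ + ε * ‖(v₀ : H)‖ := ciInf_le hIbdd v₀
        _ = ε * b + c * a := hdual
        _ ≤ sSup {y : ℝ | ∃ g : H, ‖g‖ ≤ 1 ∧ ‖P g‖ ≤ ε ∧ y = ⟪x, g⟫} := le_csSup hSbdd hmemS
end
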